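/- The right twist preserves the positroid envelope: let M be the collection of k-element subsets J of {1, …, n} such that I→_a ≼_a J for every a ∈ {1, …, n} (J being compared after representing its elements in {a, …, a+n−1}). Then Δ_J(τ→(A)) = 0 for every k-element subset J ∉ M; consequently τ→(A) has rank k and, for every a, the a-minimal column basis of τ→(A) equals I→_a(A). -/

import Mathlib

open scoped BigOperators

/-- The columns of `A` are `n`-periodic. -/
def ColPeriodic (k n : ℕ) (A : ℤ → Fin k → ℂ) : Prop :=
  ∀ a : ℤ, A (a + (n : ℤ)) = A a

/-- `A` has rank `k`, i.e. its columns span `ℂ^k`. -/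
def FullRank (k : ℕ) (A : ℤ → Fin k → ℂ) : Prop :=
  Submodule.span ℂ (Set.range A) = ⊤

/-- The Gale (componentwise) partial order on finite subsets of `ℤ` of equal
cardinality: `B ≼ C` iff they have the same cardinality and, for each `i`, the
`i`-th smallest element of `B` is at most the `i`-th smallest element of `C`
(equivalently, the counting condition below). -/
def galeLE (B C : Finset ℤ) : Prop :=
  B.card = C.card ∧
    ∀ t : ℤ, (B.filter fun x => t ≤ x).card ≤ (C.filter fun x => t ≤ x).card

/-- The columns of `A` indexed by `J` form a basis of `ℂ^k`. -/
def IsColBasis (k : ℕ) (A : ℤ → Fin k → ℂ) (J : Finset ℤ) : Prop :=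
  J.card = k ∧ LinearIndependent ℂ (fun j : (J : Set ℤ) => A (j : ℤ)) ∧
    Submodule.span ℂ (A '' (J : Set ℤ)) = ⊤

/-- `I` is the `≼_a`-minimal `k`-element subset of `{a, a+1, …, a+n-1}` whose
columns form a basis of `ℂ^k` (the `a`-minimal basis `I→_a`). -/
def IsMinBasis (k n : ℕ) (A : ℤ → Fin k → ℂ) (a : ℤ) (I : Finset ℤ) : Prop :=
  I ⊆ Finset.Ico a (a + (n : ℤ)) ∧ IsColBasis k A I ∧
    ∀ J : Finset ℤ, J ⊆ Finset.Ico a (a + (n : ℤ)) → IsColBasis k A J → galeLE I J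

/-- `I` is the `≼_{a+1}`-maximal `k`-element subset of `{a-n+1, …, a}` whose
columns form a basis of `ℂ^k` (the `a`-maximal basis `I←_a`).  Note that on
representatives in `{a-n+1, …, a}` the cyclic order `≺_{a+1}` agrees with the
usual order of `ℤ`. -/
def IsMaxBasis (k n : ℕ) (A : ℤ → Fin k → ℂ) (a : ℤ) (I : Finset ℤ) : Prop :=
  I ⊆ Finset.Ioc (a - (n : ℤ)) a ∧ IsColBasis k A I ∧
    ∀ J : Finset ℤ, J ⊆ Finset.Ioc (a - (n : ℤ)) a → IsColBasis k A J → galeLE J I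

/-- The standard symmetric bilinear form `⟨x|y⟩ = ∑ i, x i * y i` on `ℂ^k`. -/
noncomputable def bil (k : ℕ) (x y : Fin k → ℂ) : ℂ := ∑ i, x i * y i

/-- `π` is the bounded affine permutation of `A`:
`π a` is the least `r` with `a ≤ r ≤ a + n` and `A a ∈ span(A (a+1), …, A r)`. -/
def IsBAP (k n : ℕ) (A : ℤ → Fin k → ℂ) (π : ℤ → ℤ) : Prop :=
  ∀ a : ℤ,
    a ≤ π a ∧ π a ≤ a + (n : ℤ) ∧
    A a ∈ Submodule.span ℂ (A '' Set.Ioc a (π a)) ∧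
    ∀ r : ℤ, a ≤ r → r ≤ a + (n : ℤ) →
      A a ∈ Submodule.span ℂ (A '' Set.Ioc a r) → π a ≤ r

/-- `T` is the right twist `τ→(A)`: for each `a`, the column `T a` pairs to `1`
with `A a` and to `0` with the other columns of the `a`-minimal basis. -/
def IsRightTwist (k n : ℕ) (A T : ℤ → Fin k → ℂ) : Prop :=
  ∀ (a : ℤ) (I : Finset ℤ), IsMinBasis k n A a I →
    ∀ b ∈ I, bil k (T a) (A b) = if b = a then 1 else 0

/-- `T` is the left twist `τ←(A)`: for each `a`, the column `T a` pairs to `1`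
with `A a` and to `0` with the other columns of the `a`-maximal basis. -/
def IsLeftTwist (k n : ℕ) (A T : ℤ → Fin k → ℂ) : Prop :=
  ∀ (a : ℤ) (I : Finset ℤ), IsMaxBasis k n A a I →
    ∀ b ∈ I, bil k (T a) (A b) = if b = a then 1 else 0

/-- `Δ_I(A)`, where `I = {i 0 < i 1 < ⋯ < i (k-1)}` is given by a strictly
monotone enumeration `i : Fin k → ℤ`: the determinant of the `k×k` matrix with
columns `A (i 0), …, A (i (k-1))`. -/
noncomputable def Delta (k : ℕ) (A : ℤ → Fin k → ℂ) (i : Fin k → ℤ) : ℂ :=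
  Matrix.det (Matrix.of fun r s : Fin k => A (i s) r)


/-!
The `a`-minimal basis is the greedy basis `greedy ℂ A a (a + n)`: scan `a, a + 1, …` and keep
each column that is not in the span of the earlier ones. Its number of elements below `t` is
the dimension of `span (A '' Ico a t)`, which bounds the number of columns below `t` of any
basis inside the window; this is exactly its Gale minimality.

By the definition of the twist, `T c` pairs to zero with every greedy column `A j` of the
`a`-window with `c < j`, and to one with `A c`. Triangularity makes the `T`-columns at the
greedy positions below `b` independent, while `span (T '' Ico a b)` lies in the annihilator of
the greedy columns `A j`, `j ≥ b`. So `T` and `A` have the same rank on every initial segment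
`Ico a b` of every window, hence the same greedy bases, and `T` is again periodic of full rank.
The vanishing of `Δ_J(T)` for `J ∉ M` is then Gale minimality for `T`: if `Δ_J(T) ≠ 0`, the
representatives of `J` in the `a`-window index a basis of columns of `T`, so `I→_a ≼_a J`.
-/

open Submodule Module Set

theorem Finset.filter_add_one_le_eq_erase (D : Finset ℤ) (x : ℤ) :
    D.filter (x + 1 ≤ ·) = (D.filter (x ≤ ·)).erase x := by
  ext y
  simp only [Finset.mem_filter, Finset.mem_erase]
  grind

theorem Finset.mem_iff_card_filter_add_one_le_lt (D : Finset ℤ) (x : ℤ) :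
    x ∈ D ↔ (D.filter (x + 1 ≤ ·)).card < (D.filter (x ≤ ·)).card := by
  rw [Finset.filter_add_one_le_eq_erase]
  refine ⟨fun hx => Finset.card_erase_lt_of_mem (Finset.mem_filter.2 ⟨hx, le_rfl⟩),
    fun hlt => by_contra fun hx => hlt.ne ?_⟩
  rw [Finset.erase_eq_of_notMem (by simp [hx])]

theorem Finset.card_filter_lt_add_card_filter_le {α : Type*} [LinearOrder α] (D : Finset α)
    (t : α) : (D.filter (· < t)).card + (D.filter (t ≤ ·)).card = D.card := by
  convert D.card_filter_add_card_filter_not (· < t) using 3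
  simp

theorem galeLE_antisymm {B C : Finset ℤ} (h₁ : galeLE B C) (h₂ : galeLE C B) : B = C := by
  have hcard (t : ℤ) : (B.filter (t ≤ ·)).card = (C.filter (t ≤ ·)).card :=
    (h₁.2 t).antisymm (h₂.2 t)
  ext x
  rw [Finset.mem_iff_card_filter_add_one_le_lt, Finset.mem_iff_card_filter_add_one_le_lt,
    hcard, hcard]

theorem galeLE_of_card_filter_lt_le {B C : Finset ℤ} (hcard : B.card = C.card)
    (h : ∀ t, (C.filter (· < t)).card ≤ (B.filter (· < t)).card) : galeLE B C := by
  refine ⟨hcard, fun t => ?_⟩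
  have hB := B.card_filter_lt_add_card_filter_le t
  have hC := C.card_filter_lt_add_card_filter_le t
  have := h t
  omega

section LinearAlgebra

variable {ι K V : Type*} [Field K] [AddCommGroup V] [Module K V]

theorem linearIndepOn_of_notMem_span_image_Iio [LinearOrder ι] {v : ι → V} {S : Finset ι}
    (h : ∀ j ∈ S, v j ∉ span K (v '' (↑S ∩ Iio j))) : LinearIndepOn K v S := by
  classical
  induction S using Finset.induction_on_max with
  | empty => simp
  | insert x s hlt ih =>
    have hx : x ∉ (s : Set ι) := fun hx => lt_irrefl x (hlt x hx)
    have hIio : (↑(insert x s) : Set ι) ∩ Iio x = s := by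
      ext y
      simp only [Finset.coe_insert, mem_inter_iff, mem_insert_iff, Finset.mem_coe, mem_Iio]
      exact ⟨fun ⟨h, hy⟩ => h.resolve_left hy.ne, fun hy => ⟨Or.inr hy, hlt y hy⟩⟩
    rw [Finset.coe_insert, linearIndepOn_insert hx]
    refine ⟨ih fun j hj hmem => h j (Finset.mem_insert_of_mem hj) ?_, ?_⟩
    · refine span_mono (image_mono (inter_subset_inter_left _ ?_)) hmem
      exact Finset.coe_subset.2 (Finset.subset_insert _ _)
    · have hx' := h x (Finset.mem_insert_self x s)
      rwa [hIio] at hx'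

theorem LinearIndepOn.finrank_span_image_finset {v : ι → V} {S : Finset ι}
    (h : LinearIndepOn K v S) : finrank K (span K (v '' S)) = S.card := by
  rw [image_eq_range, finrank_span_eq_card h]
  simp

theorem LinearIndepOn.card_le_finrank_of_image_subset [FiniteDimensional K V] {v : ι → V}
    {S : Finset ι} {W : Submodule K V} (h : LinearIndepOn K v S) (hW : v '' S ⊆ W) :
    S.card ≤ finrank K W :=
  h.finrank_span_image_finset ▸ Submodule.finrank_mono (span_le.2 hW)

theorem Matrix.finrank_ker_mulVecLin_add_card {m n : Type*} [Fintype m] [Fintype n]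
    (M : Matrix m n K) (hM : LinearIndependent K M.row) :
    finrank K (LinearMap.ker M.mulVecLin) + Fintype.card m = Fintype.card n := by
  rw [← hM.rank_matrix, Matrix.rank, add_comm, LinearMap.finrank_range_add_finrank_ker,
    Module.finrank_fintype_fun_eq_card]

end LinearAlgebra

section Greedy

variable (K : Type*) {V W : Type*} [Field K] [AddCommGroup V] [Module K V]
  [AddCommGroup W] [Module K W]

def spanIco (A : ℤ → V) (a b : ℤ) : Submodule K V :=
  span K (A '' Ico a b)

open Classical in
noncomputable def greedy (A : ℤ → V) (a b : ℤ) : Finset ℤ :=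
  (Finset.Ico a b).filter fun j => A j ∉ spanIco K A a j

variable {K} {A : ℤ → V} {a b c j : ℤ}

instance : FiniteDimensional K (spanIco K A a b) :=
  FiniteDimensional.span_of_finite K ((finite_Ico a b).image A)

theorem mem_greedy : j ∈ greedy K A a b ↔ (a ≤ j ∧ j < b) ∧ A j ∉ spanIco K A a j := by
  simp only [greedy, Finset.mem_filter, Finset.mem_Ico]

theorem greedy_subset_Ico : greedy K A a b ⊆ Finset.Ico a b :=
  fun _ hj => Finset.mem_Ico.2 (mem_greedy.1 hj).1

theorem greedy_filter_lt (a b c : ℤ) :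
    (greedy K A a b).filter (· < c) = greedy K A a (min b c) := by
  ext j
  simp only [Finset.mem_filter, mem_greedy, lt_min_iff]
  tauto

theorem greedy_mono_right (h : b ≤ c) : greedy K A a b ⊆ greedy K A a c := by
  intro j
  simp only [mem_greedy]
  exact fun ⟨⟨haj, hjb⟩, hj⟩ => ⟨⟨haj, hjb.trans_le h⟩, hj⟩

theorem spanIco_mono_left (h : a ≤ c) : spanIco K A c b ≤ spanIco K A a b :=
  span_mono (image_mono (Ico_subset_Ico_left h))

theorem mem_greedy_of_le (hac : a ≤ c) (hcj : c ≤ j) (hj : j ∈ greedy K A a b) :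
    j ∈ greedy K A c b := by
  rw [mem_greedy] at hj ⊢
  exact ⟨⟨hcj, hj.1.2⟩, fun h => hj.2 (spanIco_mono_left hac h)⟩

theorem spanIco_add_one (h : a ≤ b) : spanIco K A a (b + 1) = spanIco K A a b ⊔ K ∙ A b := by
  rw [spanIco, spanIco, Ico_add_one_right_eq_Icc, ← Ico_insert_right h, image_insert_eq,
    span_insert, sup_comm]

theorem span_greedy (A : ℤ → V) (a b : ℤ) :
    span K (A '' greedy K A a b) = spanIco K A a b := by
  refine le_antisymm (span_mono (image_mono fun j hj => ?_)) ?_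
  · simpa using greedy_subset_Ico hj
  rcases lt_or_ge b a with hba | hab
  · simp [spanIco, Ico_eq_empty_of_le hba.le]
  induction b, hab using Int.leInduction with
  | base => simp [spanIco]
  | succ b hab ih =>
    have hmono : span K (A '' greedy K A a b) ≤ span K (A '' greedy K A a (b + 1)) :=
      span_mono (image_mono (Finset.coe_subset.2 (greedy_mono_right (by omega))))
    rw [spanIco_add_one hab, sup_le_iff, span_singleton_le_iff_mem]
    refine ⟨ih.trans hmono, ?_⟩
    by_cases hb : A b ∈ spanIco K A a b
    · exact hmono (ih hb)
    · exact subset_span (mem_image_of_mem A (mem_greedy.2 ⟨⟨hab, lt_add_one b⟩, hb⟩))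

theorem linearIndepOn_greedy : LinearIndepOn K A (greedy K A a b) := by
  refine linearIndepOn_of_notMem_span_image_Iio fun j hj hmem => (mem_greedy.1 hj).2 ?_
  refine span_mono (image_mono ?_) hmem
  rintro i ⟨hi, hij⟩
  exact ⟨(mem_greedy.1 hi).1.1, hij⟩

theorem finrank_spanIco : finrank K (spanIco K A a b) = (greedy K A a b).card := by
  rw [← span_greedy]
  exact linearIndepOn_greedy.finrank_span_image_finset

theorem notMem_spanIco_iff_finrank_lt (h : a ≤ b) :
    A b ∉ spanIco K A a b ↔
      finrank K (spanIco K A a b) < finrank K (spanIco K A a (b + 1)) := by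
  constructor
  · intro hb
    apply Submodule.finrank_lt_finrank_of_lt
    rw [spanIco_add_one h]
    exact lt_sup_iff_notMem.2 hb
  · intro hlt hb
    rw [spanIco_add_one h, sup_eq_left.2 ((span_singleton_le_iff_mem _ _).2 hb)] at hlt
    exact hlt.false

theorem greedy_eq_of_finrank_spanIco_eq {B : ℤ → W}
    (h : ∀ c, a ≤ c → c ≤ b → finrank K (spanIco K A a c) = finrank K (spanIco K B a c)) :
    greedy K A a b = greedy K B a b := by
  ext j
  simp only [mem_greedy]
  refine and_congr_right fun hj => ?_
  rw [notMem_spanIco_iff_finrank_lt hj.1, notMem_spanIco_iff_finrank_lt hj.1,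
    h j hj.1 hj.2.le, h (j + 1) (by omega) (by omega)]

namespace Function.Periodic

variable {p : ℤ}

theorem spanIco_add (hA : Periodic A p) (a b : ℤ) :
    spanIco K A (a + p) (b + p) = spanIco K A a b := by
  rw [spanIco, spanIco, ← image_add_const_Ico, image_image, show (A <| · + p) = A from funext hA]

theorem add_mem_greedy_iff (hA : Periodic A p) :
    j + p ∈ greedy K A (a + p) (b + p) ↔ j ∈ greedy K A a b := by
  simp only [mem_greedy, hA.spanIco_add, hA j, add_le_add_iff_right, add_lt_add_iff_right]

theorem spanIco_add_eq_top (hA : Periodic A p) (hp : 0 < p) (hspan : span K (range A) = ⊤)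
    (a : ℤ) : spanIco K A a (a + p) = ⊤ := by
  rw [eq_top_iff, ← hspan]
  refine span_mono (range_subset_iff.2 fun x => ?_)
  obtain ⟨y, hy, hxy⟩ := hA.exists_mem_Ico hp x a
  exact ⟨y, hy, hxy.symm⟩

end Function.Periodic

end Greedy

theorem eq_zero_of_dotProduct_eq_zero {K m : Type*} [Field K] [Fintype m] {s : Set (m → K)}
    (hs : span K s = ⊤) {x : m → K} (h : ∀ y ∈ s, x ⬝ᵥ y = 0) : x = 0 :=
  dotProduct_eq_zero x fun w =>
    LinearMap.congr_fun (LinearMap.ext_on hs (f := dotProductBilin K K x) (g := 0) h) w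

section MinimalBasis

variable {k n : ℕ} {A T : ℤ → Fin k → ℂ} {a : ℤ}

theorem ColPeriodic.spanIco_add_eq_top (hper : ColPeriodic k n A) (hrank : FullRank k A)
    (hkn : k ≤ n) (a : ℤ) : spanIco ℂ A a (a + n) = ⊤ := by
  rcases n.eq_zero_or_pos with rfl | hn
  · obtain rfl : k = 0 := Nat.le_zero.1 hkn
    exact Subsingleton.elim _ _
  · exact Function.Periodic.spanIco_add_eq_top hper (Int.natCast_pos.2 hn) hrank a

theorem card_greedy_of_spanIco_eq_top (htop : spanIco ℂ A a (a + n) = ⊤) :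
    (greedy ℂ A a (a + n)).card = k := by
  rw [← finrank_spanIco, htop, finrank_top, Module.finrank_fin_fun]

theorem isColBasis_greedy (htop : spanIco ℂ A a (a + n) = ⊤) :
    IsColBasis k A (greedy ℂ A a (a + n)) :=
  ⟨card_greedy_of_spanIco_eq_top htop, linearIndepOn_greedy, by rw [span_greedy, htop]⟩

theorem galeLE_greedy (htop : spanIco ℂ A a (a + n) = ⊤) {J : Finset ℤ}
    (hJ : J ⊆ Finset.Ico a (a + n)) (hJb : IsColBasis k A J) :
    galeLE (greedy ℂ A a (a + n)) J := by
  refine galeLE_of_card_filter_lt_le (by rw [card_greedy_of_spanIco_eq_top htop, hJb.1])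
    fun t => ?_
  rw [greedy_filter_lt, ← finrank_spanIco]
  refine (LinearIndepOn.mono hJb.2.1 (Finset.coe_subset.2 (Finset.filter_subset _ _)))
    |>.card_le_finrank_of_image_subset ?_
  rintro _ ⟨j, hj, rfl⟩
  rw [Finset.mem_coe, Finset.mem_filter] at hj
  have hja := Finset.mem_Ico.1 (hJ hj.1)
  exact subset_span (mem_image_of_mem A ⟨hja.1, lt_min hja.2 hj.2⟩)

theorem isMinBasis_iff_eq_greedy (htop : spanIco ℂ A a (a + n) = ⊤) {I : Finset ℤ} :
    IsMinBasis k n A a I ↔ I = greedy ℂ A a (a + n) := by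
  refine ⟨fun ⟨hI, hIb, hmin⟩ => ?_, ?_⟩
  · exact galeLE_antisymm (hmin _ greedy_subset_Ico (isColBasis_greedy htop))
      (galeLE_greedy htop hI hIb)
  · rintro rfl
    exact ⟨greedy_subset_Ico, isColBasis_greedy htop, fun _ => galeLE_greedy htop⟩

end MinimalBasis

theorem isColBasis_image_of_delta_ne_zero {k : ℕ} {T : ℤ → Fin k → ℂ} {c : Fin k → ℤ}
    (h : Delta k T c ≠ 0) : IsColBasis k T (Finset.univ.image c) := by
  have hli : LinearIndependent ℂ (T ∘ c) := Matrix.linearIndependent_cols_iff_isUnit.2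
    ((Matrix.isUnit_iff_isUnit_det _).2 (isUnit_iff_ne_zero.2 h))
  rw [IsColBasis, Finset.coe_image, Finset.coe_univ, image_univ, ← range_comp,
    Finset.card_image_of_injective _ hli.injective.of_comp, Finset.card_univ, Fintype.card_fin]
  refine ⟨rfl, ?_, hli.span_eq_top_of_card_eq_finrank' (by simp)⟩
  rw [← image_univ]
  exact (linearIndepOn_univ_iff.2 hli).image_of_comp

section Twist

variable {k n : ℕ} {A T : ℤ → Fin k → ℂ}

theorem IsRightTwist.dotProduct_of_mem_greedy (hT : IsRightTwist k n A T)
    (htop : ∀ a, spanIco ℂ A a (a + n) = ⊤) {a c j : ℤ} (hac : a ≤ c) (hcj : c ≤ j)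
    (hj : j ∈ greedy ℂ A a (a + n)) : T c ⬝ᵥ A j = if j = c then 1 else 0 :=
  -- `bil k x y` unfolds to `x ⬝ᵥ y`
  hT c _ ((isMinBasis_iff_eq_greedy (htop c)).2 rfl) j
    (greedy_mono_right (by omega) (mem_greedy_of_le hac hcj hj))

theorem IsRightTwist.dotProduct_eq_zero_of_lt (hT : IsRightTwist k n A T)
    (htop : ∀ a, spanIco ℂ A a (a + n) = ⊤) {a c j : ℤ} (hac : a ≤ c) (hcj : c < j)
    (hj : j ∈ greedy ℂ A a (a + n)) : T c ⬝ᵥ A j = 0 := by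
  rw [hT.dotProduct_of_mem_greedy htop hac hcj.le hj, if_neg hcj.ne']

theorem IsRightTwist.periodic (hT : IsRightTwist k n A T) (hper : ColPeriodic k n A)
    (htop : ∀ a, spanIco ℂ A a (a + n) = ⊤) : ColPeriodic k n T := by
  intro a
  rw [← sub_eq_zero]
  refine eq_zero_of_dotProduct_eq_zero (isColBasis_greedy (htop a)).2.2 ?_
  rintro _ ⟨j, hj, rfl⟩
  have haj := (mem_greedy.1 hj).1.1
  have hjn : j + n ∈ greedy ℂ A (a + n) (a + n + n) :=
    (Function.Periodic.add_mem_greedy_iff hper).2 hj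
  have hshift : T (a + n) ⬝ᵥ A j = if j = a then 1 else 0 := by
    rw [← hper j, hT.dotProduct_of_mem_greedy htop le_rfl (by omega) hjn]
    simp only [add_left_inj]
  rw [sub_dotProduct, hshift, hT.dotProduct_of_mem_greedy htop le_rfl haj hj, sub_self]

theorem IsRightTwist.linearIndepOn_greedy (hT : IsRightTwist k n A T)
    (htop : ∀ a, spanIco ℂ A a (a + n) = ⊤) {a b : ℤ} (hb : b ≤ a + n) :
    LinearIndepOn ℂ T (greedy ℂ A a b) := by
  refine linearIndepOn_of_notMem_span_image_Iio fun j hj hmem => ?_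
  have hjG := greedy_mono_right hb hj
  have hle : span ℂ (T '' (↑(greedy ℂ A a b) ∩ Iio j)) ≤
      LinearMap.ker ((dotProductBilin ℂ ℂ).flip (A j)) := by
    refine span_le.2 ?_
    rintro _ ⟨c, ⟨hc, hcj⟩, rfl⟩
    simpa using hT.dotProduct_eq_zero_of_lt htop (mem_greedy.1 hc).1.1 hcj hjG
  have hj1 := hT.dotProduct_of_mem_greedy htop (mem_greedy.1 hj).1.1 le_rfl hjG
  rw [if_pos rfl] at hj1
  have hj0 : T j ⬝ᵥ A j = 0 := by simpa using hle hmem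
  exact one_ne_zero (hj1.symm.trans hj0)

theorem IsRightTwist.finrank_spanIco_add_card_le (hT : IsRightTwist k n A T)
    (htop : ∀ a, spanIco ℂ A a (a + n) = ⊤) (a b : ℤ) :
    finrank ℂ (spanIco ℂ T a b) + ((greedy ℂ A a (a + n)).filter (b ≤ ·)).card ≤ k := by
  let M := Matrix.of fun j : (greedy ℂ A a (a + n)).filter (b ≤ ·) => A j
  have hrows : LinearIndependent ℂ M.row :=
    LinearIndepOn.mono _root_.linearIndepOn_greedy (Finset.coe_subset.2 (Finset.filter_subset _ _))
  have hle : spanIco ℂ T a b ≤ LinearMap.ker M.mulVecLin := by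
    refine span_le.2 ?_
    rintro _ ⟨c, ⟨hac, hcb⟩, rfl⟩
    ext ⟨j, hj⟩
    obtain ⟨hjG, hbj⟩ := Finset.mem_filter.1 hj
    simpa [M, Matrix.mulVec, dotProduct_comm] using
      hT.dotProduct_eq_zero_of_lt htop hac (hcb.trans_le hbj) hjG
  have hker := M.finrank_ker_mulVecLin_add_card hrows
  simp only [Fintype.card_coe, Fintype.card_fin] at hker
  have := Submodule.finrank_mono hle
  omega

theorem IsRightTwist.finrank_spanIco_eq (hT : IsRightTwist k n A T)
    (htop : ∀ a, spanIco ℂ A a (a + n) = ⊤) {a b : ℤ} (hb : b ≤ a + n) :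
    finrank ℂ (spanIco ℂ T a b) = finrank ℂ (spanIco ℂ A a b) := by
  rw [finrank_spanIco (A := A)]
  apply le_antisymm
  · have hsplit := (greedy ℂ A a (a + n)).card_filter_lt_add_card_filter_le b
    rw [card_greedy_of_spanIco_eq_top (htop a), greedy_filter_lt, min_eq_right hb] at hsplit
    have := hT.finrank_spanIco_add_card_le htop a b
    omega
  · refine (hT.linearIndepOn_greedy htop hb).card_le_finrank_of_image_subset ?_
    rintro _ ⟨j, hj, rfl⟩
    exact subset_span (mem_image_of_mem T (mem_greedy.1 hj).1)

theorem IsRightTwist.greedy_eq (hT : IsRightTwist k n A T)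
    (htop : ∀ a, spanIco ℂ A a (a + n) = ⊤) (a : ℤ) :
    greedy ℂ T a (a + n) = greedy ℂ A a (a + n) :=
  greedy_eq_of_finrank_spanIco_eq fun _ _ hc => hT.finrank_spanIco_eq htop hc

theorem IsRightTwist.spanIco_add_eq_top (hT : IsRightTwist k n A T)
    (htop : ∀ a, spanIco ℂ A a (a + n) = ⊤) (a : ℤ) : spanIco ℂ T a (a + n) = ⊤ :=
  Submodule.eq_top_of_finrank_eq
    ((hT.finrank_spanIco_eq htop le_rfl).trans (by rw [htop a, finrank_top]))

theorem IsRightTwist.fullRank (hT : IsRightTwist k n A T)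
    (htop : ∀ a, spanIco ℂ A a (a + n) = ⊤) : FullRank k T :=
  top_unique ((hT.spanIco_add_eq_top htop 0).symm.le.trans (span_mono (image_subset_range _ _)))

theorem IsRightTwist.isMinBasis_iff (hT : IsRightTwist k n A T)
    (htop : ∀ a, spanIco ℂ A a (a + n) = ⊤) (a : ℤ) (I : Finset ℤ) :
    IsMinBasis k n A a I ↔ IsMinBasis k n T a I := by
  rw [isMinBasis_iff_eq_greedy (htop a), isMinBasis_iff_eq_greedy (hT.spanIco_add_eq_top htop a),
    hT.greedy_eq htop]

end Twist

theorem twist_preserves_positroid_general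
    (k n : ℕ) (hkn : k ≤ n)
    (A : ℤ → Fin k → ℂ) (hper : ColPeriodic k n A) (hrank : FullRank k A)
    (T : ℤ → Fin k → ℂ) (hT : IsRightTwist k n A T) :
    (∀ i : Fin k → ℤ, StrictMono i →
      (Finset.image i Finset.univ : Finset ℤ) ⊆ Finset.Icc 1 (n : ℤ) →
      ¬ (∀ a ∈ Finset.Icc (1 : ℤ) (n : ℤ), ∀ Ia : Finset ℤ,
          IsMinBasis k n A a Ia →
          galeLE Ia ((Finset.image i Finset.univ).image
            (fun j => if j < a then j + (n : ℤ) else j))) →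
      Delta k T i = 0) ∧
    FullRank k T ∧
    (∀ (a : ℤ) (Ia : Finset ℤ), IsMinBasis k n A a Ia ↔ IsMinBasis k n T a Ia) := by
  have htop := hper.spanIco_add_eq_top hrank hkn
  have hTper := hT.periodic hper htop
  refine ⟨fun i _ hJ hnotM => ?_, hT.fullRank htop, hT.isMinBasis_iff htop⟩
  by_contra hdet
  refine hnotM fun a ha Ia hIa => ?_
  set shift : ℤ → ℤ := fun j => if j < a then j + n else j
  have hTshift : T ∘ shift = T := funext fun j => by
    by_cases h : j < a <;> simp [shift, h, hTper j]
  rw [Finset.image_image]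
  refine ((hT.isMinBasis_iff htop a Ia).1 hIa).2.2 _ ?_ (isColBasis_image_of_delta_ne_zero ?_)
  · intro j hj
    obtain ⟨s, -, rfl⟩ := Finset.mem_image.1 hj
    have hs := Finset.mem_Icc.1 (hJ (Finset.mem_image_of_mem i (Finset.mem_univ s)))
    have ha' := Finset.mem_Icc.1 ha
    simp only [Function.comp, shift, Finset.mem_Ico]
    split_ifs <;> omega
  · show Delta k (T ∘ shift) i ≠ 0
    rwa [hTshift]

/-- the right twist preserves the positroid envelope: let
`M` be the collection of `k`-element subsets `J` of `{1, …, n}` with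
`I→_a ≼_a J` for every `a ∈ {1, …, n}` (comparing `J` after representing its
elements in `{a, …, a+n-1}`, i.e. replacing `j < a` by `j + n`).  Then
`Δ_J(τ→(A)) = 0` for every `k`-subset `J ∉ M`; consequently `τ→(A)` has rank
`k` and, for every `a`, the `a`-minimal column basis of `τ→(A)` equals
`I→_a(A)`. -/
theorem twist_preserves_positroid
    (k n : ℕ) (hk : 1 ≤ k) (hkn : k ≤ n)
    (A : ℤ → Fin k → ℂ) (hper : ColPeriodic k n A) (hrank : FullRank k A)
    (T : ℤ → Fin k → ℂ) (hT : IsRightTwist k n A T) :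
    (∀ i : Fin k → ℤ, StrictMono i →
      (Finset.image i Finset.univ : Finset ℤ) ⊆ Finset.Icc 1 (n : ℤ) →
      ¬ (∀ a ∈ Finset.Icc (1 : ℤ) (n : ℤ), ∀ Ia : Finset ℤ,
          IsMinBasis k n A a Ia →
          galeLE Ia ((Finset.image i Finset.univ).image
            (fun j => if j < a then j + (n : ℤ) else j))) →
      Delta k T i = 0) ∧
    FullRank k T ∧
    (∀ (a : ℤ) (Ia : Finset ℤ), IsMinBasis k n A a Ia ↔ IsMinBasis k n T a Ia) :=
  twist_preserves_positroid_general k n hkn A hper hrank T hT
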